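/- There exists a constant c > 0 (one may take c = 1/128) such that for every point (x,y) ∈ ∂Q, every radius r < 1/4, every i ∈ {1,2,3,4} and both choices of sign, the Lebesgue measure satisfies L²(B((x,y),r) ∩ Ω^{p_v}_{±i}) ≥ c·r², where B((x,y),r) is the open Euclidean ball of radius r centered at (x,y). -/

import Mathlib

open MeasureTheory Set
open scoped ENNReal NNReal

noncomputable section

/-- The plane `ℝ²`. -/
abbrev E2 := EuclideanSpace ℝ (Fin 2)

/-- The point `(x, y) ∈ ℝ²`. -/
def pt (x y : ℝ) : E2 := WithLp.toLp 2 ![x, y]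

def A1 : Matrix (Fin 2) (Fin 2) ℝ := !![1, 0; 0, 1]
def A2 : Matrix (Fin 2) (Fin 2) ℝ := !![0, 1; 1, 0]
def A3 : Matrix (Fin 2) (Fin 2) ℝ := !![-1, 0; 0, 1]
def A4 : Matrix (Fin 2) (Fin 2) ℝ := !![0, -1; 1, 0]

/-- The set `E = {±A₁, ±A₂, ±A₃, ±A₄}`. -/
def Eset : Set (Matrix (Fin 2) (Fin 2) ℝ) := {A1, -A1, A2, -A2, A3, -A3, A4, -A4}

/-- The continuous linear map on `ℝ²` associated to a `2 × 2` matrix. -/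
def matCLM (A : Matrix (Fin 2) (Fin 2) ℝ) : E2 →L[ℝ] E2 :=
  LinearMap.toContinuousLinearMap (Matrix.toEuclideanLin A)

/-- `a(x,y) = min {1+x, 1−x, 1+y, 1−y}`. -/
def aFun (x y : ℝ) : ℝ := min (min (1 + x) (1 - x)) (min (1 + y) (1 - y))

/-- `b(x,y) = max {1−|x|, 1−|y|}`. -/
def bFun (x y : ℝ) : ℝ := max (1 - |x|) (1 - |y|)

/-- The function `c` of the construction. -/
def cFun (x y : ℝ) : ℝ :=
  if |x| ≤ y then 1 - |x|
  else if |y| ≤ -x then 1 - y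
  else if |x| ≤ -y then 1 - x
  else 1 - |y|

/-- The function `d` of the construction. -/
def dFun (x y : ℝ) : ℝ :=
  if |x| ≤ y then 1 - x
  else if |y| ≤ -x then 1 + y
  else if |x| ≤ -y then 1 - |x|
  else 1 - |y|

/-- The rescaling `f_k(x,y) = 2^{−k} f(2^k x, 2^k y)`. -/
def resc (f : ℝ → ℝ → ℝ) (k : ℕ) (x y : ℝ) : ℝ :=
  (2 : ℝ) ^ (-(k : ℤ)) * f ((2 : ℝ) ^ k * x) ((2 : ℝ) ^ k * y)

/-- `x₀ = 0`, `x_k = 2 − 2^{1−k}` for `k ≥ 1`. -/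
def xc : ℕ → ℝ
  | 0 => 0
  | (k + 1) => 2 - (2 : ℝ) ^ (1 - ((k : ℤ) + 1))

/-- `y_k^i = i · 2^{1−k}`. -/
def yc (k i : ℕ) : ℝ := (i : ℝ) * (2 : ℝ) ^ (1 - (k : ℤ))

/-- The open square `Q_{k,i} = (x_{k−1}, x_k) × (y_k^i, y_k^{i+1})`. -/
def Qki (k i : ℕ) : Set E2 :=
  {z | z 0 ∈ Set.Ioo (xc (k - 1)) (xc k) ∧ z 1 ∈ Set.Ioo (yc k i) (yc k (i + 1))}

/-- The triangle `T = {(x,y) : 0 ≤ y ≤ x ≤ 2}`. -/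
def Tset : Set E2 := {z | 0 ≤ z 1 ∧ z 1 ≤ z 0 ∧ z 0 ≤ 2}

/-- The open square `Q = (−2,2) × (−2,2)`. -/
def Qsq : Set E2 := {z | z 0 ∈ Set.Ioo (-2 : ℝ) 2 ∧ z 1 ∈ Set.Ioo (-2 : ℝ) 2}

/-- First coordinate of the center of `Q_{k,i}`. -/
def ctrX (k : ℕ) : ℝ := (xc (k - 1) + xc k) / 2

/-- Second coordinate of the center of `Q_{k,i}`. -/
def ctrY (k i : ℕ) : ℝ := (yc k i + yc k (i + 1)) / 2

/-- The formula for the second component of `p_v` on `Q_{k,i} ∩ T` (in shifted coordinates):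
`b_k` if `i = 2^k − 2`, `d_k` if `i` is even (hence `i ≤ 2^k − 4`), `c_k` if `i` is odd
(hence `i ≤ 2^k − 3`). -/
def secondFun (k i : ℕ) (x y : ℝ) : ℝ :=
  if i = 2 ^ k - 2 then resc bFun k x y
  else if i % 2 = 0 then resc dFun k x y
  else resc cFun k x y

/-- The defining properties of the vectorial pyramid `p_v` on the closed square `[−2,2]²`:
on each `Q_{k,i} ∩ T` it is given by the explicit formulas; each component is invariant under
the reflections `(x,y) ↦ (y,x)`, `(x,y) ↦ (−x,y)`, `(x,y) ↦ (x,−y)`; and it vanishes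
on `∂Q`. -/
def PyramidSpec (p : E2 → E2) : Prop :=
  (∀ k : ℕ, 1 ≤ k → ∀ i : ℕ, i ≤ 2 ^ k - 2 → ∀ z ∈ Qki k i ∩ Tset,
      p z 0 = resc aFun k (z 0 - ctrX k) (z 1 - ctrY k i) ∧
      p z 1 = secondFun k i (z 0 - ctrX k) (z 1 - ctrY k i)) ∧
  (∀ x y : ℝ,
      p (pt y x) = p (pt x y) ∧ p (pt (-x) y) = p (pt x y) ∧ p (pt x (-y)) = p (pt x y)) ∧
  (∀ z ∈ frontier Qsq, p z = 0)

/-- The set `Ω^{p}_{A} = {z ∈ Q : p is differentiable at z with Dp(z) = A}`. -/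
def OmegaSet (p : E2 → E2) (A : Matrix (Fin 2) (Fin 2) ℝ) : Set E2 :=
  {z | z ∈ Qsq ∧ HasFDerivAt p (matCLM A) z}


/-!
Fix a boundary point `z = (2, t)` with `0 ≤ t ≤ 2` and a dyadic scale `σ = 2^{-k}` with
`r/32 ≤ σ ≤ r/16`. The column of squares `Q_{k,i}` adjacent to the edge `x = 2` has side `2σ`,
so those of its squares at height close to `t` lie in `B(z, r)`. On `Q_{k,i}` the map `p_v` is a
rescaled copy of `(a, d)` (even `i`) or `(a, c)` (odd `i`), and each of the eight matrices of `E`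
is the gradient of one of these two model maps on a square of side `1/4` of the unit cell, hence
the gradient of `p_v` on a square of side `σ/4 ≥ r/128`. Taking two consecutive rows makes both
models available. Every other boundary point is the image of such a `z` under the reflections
that leave `p_v` invariant; they act on gradients by right multiplication by `A₂`, `A₃` or `-A₃`,
which permutes `E`.
-/

@[simp] lemma pt_apply_zero (x y : ℝ) : pt x y 0 = x := rfl

@[simp] lemma pt_apply_one (x y : ℝ) : pt x y 1 = y := rfl

lemma pt_eta (z : E2) : pt (z 0) (z 1) = z := by
  ext j; fin_cases j <;> rfl

lemma matCLM_eq_toEuclideanCLM (A : Matrix (Fin 2) (Fin 2) ℝ) :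
    matCLM A = Matrix.toEuclideanCLM (n := Fin 2) (𝕜 := ℝ) A := rfl

lemma matCLM_apply (A : Matrix (Fin 2) (Fin 2) ℝ) (w : E2) :
    matCLM A w = pt (A 0 0 * w 0 + A 0 1 * w 1) (A 1 0 * w 0 + A 1 1 * w 1) := by
  ext j
  fin_cases j <;> simp [matCLM_eq_toEuclideanCLM, Matrix.mulVec, dotProduct, Fin.sum_univ_two]

lemma matCLM_mul (A B : Matrix (Fin 2) (Fin 2) ℝ) :
    matCLM (A * B) = (matCLM A).comp (matCLM B) := by
  simp only [matCLM_eq_toEuclideanCLM, map_mul]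
  rfl

def rect (a b c d : ℝ) : Set E2 := {w | w 0 ∈ Ioo a b ∧ w 1 ∈ Ioo c d}

lemma isOpen_rect (a b c d : ℝ) : IsOpen (rect a b c d) :=
  (isOpen_Ioo.preimage (by fun_prop)).inter (isOpen_Ioo.preimage (by fun_prop))

lemma volume_rect (a b c d : ℝ) :
    volume (rect a b c d) = ENNReal.ofReal (b - a) * ENNReal.ofReal (d - c) := by
  have h : rect a b c d =
      (MeasurableEquiv.toLp 2 (Fin 2 → ℝ)).symm ⁻¹' univ.pi ![Ioo a b, Ioo c d] := by
    ext w
    simp [rect, Fin.forall_fin_two]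
  rw [h, (EuclideanSpace.volume_preserving_symm_measurableEquiv_toLp (Fin 2)).measure_preimage
    (MeasurableSet.univ_pi fun i => by fin_cases i <;> exact measurableSet_Ioo).nullMeasurableSet,
    volume_pi_pi]
  simp [Fin.prod_univ_two]

lemma Qsq_eq_rect : Qsq = rect (-2) 2 (-2) 2 := rfl

lemma abs_le_two_and_of_mem_frontier_Qsq {z : E2} (hz : z ∈ frontier Qsq) :
    |z 0| ≤ 2 ∧ |z 1| ≤ 2 ∧ (|z 0| = 2 ∨ |z 1| = 2) := by
  rw [Qsq_eq_rect, (isOpen_rect _ _ _ _).frontier_eq] at hz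
  obtain ⟨hcl, hnot⟩ := hz
  have hsq : closure (rect (-2) 2 (-2) 2) ⊆ {w : E2 | |w 0| ≤ 2} ∩ {w | |w 1| ≤ 2} :=
    closure_minimal (fun w ⟨h0, h1⟩ => ⟨abs_le.2 ⟨h0.1.le, h0.2.le⟩, abs_le.2 ⟨h1.1.le, h1.2.le⟩⟩)
      ((isClosed_le (by fun_prop) (by fun_prop)).inter (isClosed_le (by fun_prop) (by fun_prop)))
  obtain ⟨h0, h1⟩ := hsq hcl
  refine ⟨h0, h1, ?_⟩
  by_contra! hne
  exact hnot ⟨abs_lt.1 (lt_of_le_of_ne h0 hne.1), abs_lt.1 (lt_of_le_of_ne h1 hne.2)⟩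

lemma mul_mem_Eset {A B : Matrix (Fin 2) (Fin 2) ℝ} (hA : A ∈ Eset) (hB : B ∈ Eset) :
    A * B ∈ Eset := by
  simp only [Eset, mem_insert_iff, mem_singleton_iff] at hA hB ⊢
  rcases hA with rfl | rfl | rfl | rfl | rfl | rfl | rfl | rfl <;>
  rcases hB with rfl | rfl | rfl | rfl | rfl | rfl | rfl | rfl <;>
  simp [A1, A2, A3, A4]

lemma Eset_subset_unitaryGroup : Eset ⊆ Matrix.unitaryGroup (Fin 2) ℝ := by
  intro M hM
  simp only [Eset, mem_insert_iff, mem_singleton_iff] at hM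
  rw [SetLike.mem_coe, Matrix.mem_unitaryGroup_iff]
  rcases hM with rfl | rfl | rfl | rfl | rfl | rfl | rfl | rfl <;>
  ext i j <;> fin_cases i <;> fin_cases j <;> simp [A1, A2, A3, A4, Matrix.mul_apply]

lemma subset_omegaSet_of_eqOn {p : E2 → E2} {V : Set E2} (hV : IsOpen V) (hVQ : V ⊆ Qsq)
    {A : Matrix (Fin 2) (Fin 2) ℝ} {v : E2} (h : ∀ w ∈ V, p w = matCLM A w + v) :
    V ⊆ OmegaSet p A := fun _ hw =>
  ⟨hVQ hw, ((matCLM A).hasFDerivAt.add_const v).congr_of_eventuallyEq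
    (Filter.eventually_of_mem (hV.mem_nhds hw) h)⟩

lemma volume_ball_inter_omegaSet_le_of_invariant {p : E2 → E2} {M : Matrix (Fin 2) (Fin 2) ℝ}
    (hM : M ∈ Matrix.unitaryGroup (Fin 2) ℝ) (hQ : ∀ w, matCLM M w ∈ Qsq → w ∈ Qsq)
    (hp : ∀ w, p (matCLM M w) = p w) (z : E2) (r : ℝ) (A : Matrix (Fin 2) (Fin 2) ℝ) :
    volume (Metric.ball z r ∩ OmegaSet p A) ≤
      volume (Metric.ball (matCLM (star M) z) r ∩ OmegaSet p (A * M)) := by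
  let S : E2 ≃ₗᵢ[ℝ] E2 := Unitary.linearIsometryEquiv
    ⟨matCLM M, by rw [matCLM_eq_toEuclideanCLM]; exact Unitary.map_mem _ hM⟩
  have hSsymm : S.symm z = matCLM (star M) z := by
    change (star (Matrix.toEuclideanCLM (n := Fin 2) (𝕜 := ℝ) M)) z = _
    rw [← map_star, matCLM_eq_toEuclideanCLM]
  rw [← S.measurePreserving.measure_preimage_emb S.toHomeomorph.measurableEmbedding]
  refine measure_mono fun w ⟨hball, hQw, hderiv⟩ => ⟨?_, hQ w hQw, ?_⟩
  · rw [← hSsymm, ← S.preimage_ball]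
    exact hball
  · rw [matCLM_mul, ← funext hp]
    exact hderiv.comp w (matCLM M).hasFDerivAt

def DenseGradientsNear (p : E2 → E2) (z : E2) (r : ℝ) : Prop :=
  ∀ A ∈ Eset, ENNReal.ofReal ((r / 128) ^ 2) ≤ volume (Metric.ball z r ∩ OmegaSet p A)

lemma DenseGradientsNear.of_invariant {p : E2 → E2} {M : Matrix (Fin 2) (Fin 2) ℝ}
    (hME : M ∈ Eset) (hMs : star M = M) (hQ : ∀ w, matCLM M w ∈ Qsq → w ∈ Qsq)
    (hp : ∀ w, p (matCLM M w) = p w) {z : E2} {r : ℝ} (h : DenseGradientsNear p z r) :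
    DenseGradientsNear p (matCLM M z) r := by
  intro A hA
  have hM := Eset_subset_unitaryGroup hME
  have hMM : A * M * M = A := by
    have hinv := Matrix.mem_unitaryGroup_iff'.1 hM
    rw [hMs] at hinv
    rw [Matrix.mul_assoc, hinv, Matrix.mul_one]
  calc ENNReal.ofReal ((r / 128) ^ 2) ≤ volume (Metric.ball z r ∩ OmegaSet p (A * M)) :=
        h _ (mul_mem_Eset hA hME)
    _ ≤ _ := by
        simpa only [hMs, hMM] using volume_ball_inter_omegaSet_le_of_invariant hM hQ hp z r (A * M)

lemma two_zpow_neg_mul_two_pow (k : ℕ) : (2 : ℝ) ^ (-(k : ℤ)) * 2 ^ k = 1 := by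
  rw [zpow_neg, zpow_natCast, inv_mul_cancel₀ (by positivity)]

lemma two_pow_mul_mem_Ioo {k : ℕ} {a b u : ℝ}
    (h : u ∈ Ioo (a * 2 ^ (-(k : ℤ))) (b * 2 ^ (-(k : ℤ)))) : 2 ^ k * u ∈ Ioo a b := by
  have hk := two_zpow_neg_mul_two_pow k
  have hpos : (0 : ℝ) < 2 ^ k := by positivity
  constructor
  · calc a = 2 ^ k * (a * 2 ^ (-(k : ℤ))) := by linear_combination -a * hk
      _ < 2 ^ k * u := mul_lt_mul_of_pos_left h.1 hpos
  · calc 2 ^ k * u < 2 ^ k * (b * 2 ^ (-(k : ℤ))) := mul_lt_mul_of_pos_left h.2 hpos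
      _ = b := by linear_combination b * hk

lemma exists_two_zpow_neg_near {r : ℝ} (hr : 0 < r) (hr4 : r < 1 / 4) :
    ∃ k : ℕ, 2 ≤ k ∧ r / 32 ≤ (2 : ℝ) ^ (-(k : ℤ)) ∧ (2 : ℝ) ^ (-(k : ℤ)) ≤ r / 16 := by
  obtain ⟨n, hn1, hn2⟩ := exists_nat_pow_near (x := 16 / r) (y := (2 : ℝ))
    (by rw [le_div_iff₀ hr]; linarith) one_lt_two
  have h16 : 64 < 16 / r := by rw [lt_div_iff₀ hr]; linarith
  refine ⟨n + 1, ?_, ?_, ?_⟩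
  · by_contra! hn
    obtain rfl : n = 0 := by omega
    norm_num at hn2
    linarith
  · rw [zpow_neg, zpow_natCast, le_inv_comm₀ (by positivity) (by positivity), inv_div, pow_succ]
    linarith [show 16 / r * 2 = 32 / r by ring]
  · rw [zpow_neg, zpow_natCast, inv_le_comm₀ (by positivity) (by positivity), inv_div]
    exact hn2.le

lemma exists_nat_mul_near {h t L : ℝ} {N : ℕ} (hh : 0 < h) (hN : 2 ≤ N) (hNh : N * h = L)
    (ht0 : 0 ≤ t) (htL : t ≤ L) :
    ∃ m : ℕ, m + 2 ≤ N ∧ ∀ u ∈ Icc (m * h) ((m + 1) * h), |u - t| ≤ 2 * h := by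
  refine ⟨min ⌊t / h⌋₊ (N - 2), by omega, fun u hu => ?_⟩
  have hfl : ⌊t / h⌋₊ * h ≤ t := (le_div_iff₀ hh).1 (Nat.floor_le (div_nonneg ht0 hh.le))
  rcases le_total ⌊t / h⌋₊ (N - 2) with hm | hm
  · rw [min_eq_left hm] at hu
    have hfl' : t < (⌊t / h⌋₊ + 1) * h := (div_lt_iff₀ hh).1 (Nat.lt_floor_add_one _)
    rw [abs_le]
    constructor <;> linarith [hu.1, hu.2]
  · rw [min_eq_right hm, Nat.cast_sub (by omega)] at hu
    have hN2 : ((N - 2 : ℕ) : ℝ) * h ≤ ⌊t / h⌋₊ * h :=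
      mul_le_mul_of_nonneg_right (by exact_mod_cast hm) hh.le
    rw [Nat.cast_sub (by omega)] at hN2
    push_cast at hu hN2
    rw [abs_le]
    constructor <;> linarith [hu.1, hu.2]

lemma xc_eq {k : ℕ} (hk : 1 ≤ k) : xc k = 2 - 2 * (2 : ℝ) ^ (-(k : ℤ)) := by
  obtain ⟨j, rfl⟩ : ∃ j, k = j + 1 := ⟨k - 1, by omega⟩
  rw [xc, show (1 : ℤ) - ((j : ℤ) + 1) = -((j + 1 : ℕ) : ℤ) + 1 by push_cast; ring,
    zpow_add₀ two_ne_zero]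
  ring

lemma xc_sub_one_eq {k : ℕ} (hk : 2 ≤ k) : xc (k - 1) = 2 - 4 * (2 : ℝ) ^ (-(k : ℤ)) := by
  rw [xc_eq (by omega), show -((k - 1 : ℕ) : ℤ) = -(k : ℤ) + 1 by omega, zpow_add₀ two_ne_zero]
  ring

lemma yc_eq (k i : ℕ) : yc k i = 2 * i * (2 : ℝ) ^ (-(k : ℤ)) := by
  rw [yc, show 1 - (k : ℤ) = -(k : ℤ) + 1 by ring, zpow_add₀ two_ne_zero]
  ring

lemma ctrX_eq {k : ℕ} (hk : 2 ≤ k) : ctrX k = 2 - 3 * (2 : ℝ) ^ (-(k : ℤ)) := by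
  rw [ctrX, xc_sub_one_eq hk, xc_eq (by omega)]
  ring

lemma ctrY_eq (k i : ℕ) : ctrY k i = (2 * i + 1) * (2 : ℝ) ^ (-(k : ℤ)) := by
  rw [ctrY, yc_eq, yc_eq]
  push_cast
  ring

lemma secondFun_even {k m : ℕ} (h : 2 * m + 4 ≤ 2 ^ k) : secondFun k (2 * m) = resc dFun k := by
  funext x y
  rw [secondFun, if_neg (by omega), if_pos (by omega)]

lemma secondFun_odd {k m : ℕ} (hk : 1 ≤ k) : secondFun k (2 * m + 1) = resc cFun k := by
  have h2k : 2 ^ k = 2 * 2 ^ (k - 1) := by rw [← pow_succ']; congr; omega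
  funext x y
  rw [secondFun, if_neg (by omega), if_neg (by omega)]

lemma cell_subset_Tset_inter_Qsq {k i : ℕ} (hk : 2 ≤ k) (hi : i + 3 ≤ 2 ^ k) :
    Qki k i ⊆ Tset ∩ Qsq := by
  intro w ⟨⟨hx1, hx2⟩, hy1, hy2⟩
  rw [xc_sub_one_eq hk] at hx1
  rw [xc_eq (by omega)] at hx2
  rw [yc_eq] at hy1 hy2
  push_cast at hy2
  have hσ : (0 : ℝ) < 2 ^ (-(k : ℤ)) := by positivity
  have hiσ : ((i : ℝ) + 3) * 2 ^ (-(k : ℤ)) ≤ 1 := by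
    rw [← two_zpow_neg_mul_two_pow k, mul_comm (_ + _)]
    exact mul_le_mul_of_nonneg_left (by exact_mod_cast hi) hσ.le
  have hi0 : (0 : ℝ) ≤ i * 2 ^ (-(k : ℤ)) := by positivity
  exact ⟨⟨by linarith, by linarith, by linarith⟩, ⟨by linarith, by linarith⟩, by linarith,
    by linarith⟩

lemma cell_subset_ball {k i : ℕ} (hk : 2 ≤ k) {t r : ℝ} (hr : 16 * (2 : ℝ) ^ (-(k : ℤ)) ≤ r)
    (hnear : ∀ u ∈ Icc (yc k i) (yc k (i + 1)), |u - t| ≤ 8 * (2 : ℝ) ^ (-(k : ℤ))) :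
    Qki k i ⊆ Metric.ball (pt 2 t) r := by
  intro w ⟨⟨hx1, hx2⟩, hy1, hy2⟩
  rw [xc_sub_one_eq hk] at hx1
  rw [xc_eq (by omega)] at hx2
  have hσ : (0 : ℝ) < 2 ^ (-(k : ℤ)) := by positivity
  obtain ⟨hu1, hu2⟩ := abs_le.1 (hnear (w 1) ⟨hy1.le, hy2.le⟩)
  rw [Metric.mem_ball, EuclideanSpace.dist_eq, Fin.sum_univ_two, Real.sqrt_lt' (by linarith)]
  simp only [pt_apply_zero, pt_apply_one, Real.dist_eq, sq_abs]
  nlinarith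

set_option maxHeartbeats 1000000 in
/-- Each subsquare lies in a single affine piece of `a` and of `g`; all these pieces have the
form `1 ± X` or `1 ± Y`. -/
lemma exists_affine_subsquare {A : Matrix (Fin 2) (Fin 2) ℝ} (hA : A ∈ Eset) :
    ∃ g ∈ ({dFun, cFun} : Set (ℝ → ℝ → ℝ)), ∃ P U : ℝ,
      -1 ≤ P ∧ P + 1 / 4 ≤ 1 ∧ -1 ≤ U ∧ U + 1 / 4 ≤ 1 ∧
      ∀ X ∈ Ioo P (P + 1 / 4), ∀ Y ∈ Ioo U (U + 1 / 4),
        aFun X Y = 1 + A 0 0 * X + A 0 1 * Y ∧ g X Y = 1 + A 1 0 * X + A 1 1 * Y := by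
  simp only [Eset, mem_insert_iff, mem_singleton_iff] at hA
  rcases hA with rfl | rfl | rfl | rfl | rfl | rfl | rfl | rfl <;>
  [refine ⟨dFun, by simp, -5/8, -1/8, ?_⟩; refine ⟨dFun, by simp, 5/8, 1/8, ?_⟩;
   refine ⟨dFun, by simp, -3/8, -7/8, ?_⟩; refine ⟨dFun, by simp, -1/8, 5/8, ?_⟩;
   refine ⟨dFun, by simp, 5/8, -3/8, ?_⟩; refine ⟨cFun, by simp, -5/8, -1/8, ?_⟩;
   refine ⟨cFun, by simp, -3/8, 5/8, ?_⟩; refine ⟨dFun, by simp, 1/8, -7/8, ?_⟩]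
  all_goals
    refine ⟨by norm_num, by norm_num, by norm_num, by norm_num, fun X ⟨_, _⟩ Y ⟨_, _⟩ => ?_⟩
    simp [A1, A2, A3, A4]
    constructor
    · simp only [aFun, min_def]; split_ifs <;> linarith
    · simp only [cFun, dFun, abs_eq_max_neg, max_def]; split_ifs <;> linarith

/-- The square `(P, P + 1/4) × (U, U + 1/4)` of the local coordinates `(X, Y) ∈ (-1, 1)²` of
`Q_{k,i}`, in which a point is `center of Q_{k,i} + 2^{-k} (X, Y)`. -/
def subcell (k i : ℕ) (P U : ℝ) : Set E2 :=
  rect (ctrX k + P * 2 ^ (-(k : ℤ))) (ctrX k + (P + 1 / 4) * 2 ^ (-(k : ℤ)))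
    (ctrY k i + U * 2 ^ (-(k : ℤ))) (ctrY k i + (U + 1 / 4) * 2 ^ (-(k : ℤ)))

lemma volume_subcell (k i : ℕ) (P U : ℝ) :
    volume (subcell k i P U) = ENNReal.ofReal ((2 ^ (-(k : ℤ)) / 4) ^ 2) := by
  rw [subcell, volume_rect, ← ENNReal.ofReal_mul (by ring_nf; positivity)]
  ring_nf

lemma subcell_subset_cell {k i : ℕ} (hk : 2 ≤ k) {P U : ℝ} (hP : -1 ≤ P) (hP' : P + 1 / 4 ≤ 1)
    (hU : -1 ≤ U) (hU' : U + 1 / 4 ≤ 1) : subcell k i P U ⊆ Qki k i := by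
  intro w ⟨⟨hx1, hx2⟩, hy1, hy2⟩
  rw [ctrX_eq hk] at hx1 hx2
  rw [ctrY_eq] at hy1 hy2
  have hσ : (0 : ℝ) ≤ 2 ^ (-(k : ℤ)) := by positivity
  have h1 := mul_le_mul_of_nonneg_right hP hσ
  have h2 := mul_le_mul_of_nonneg_right hP' hσ
  have h3 := mul_le_mul_of_nonneg_right hU hσ
  have h4 := mul_le_mul_of_nonneg_right hU' hσ
  refine ⟨⟨?_, ?_⟩, ?_, ?_⟩
  · rw [xc_sub_one_eq hk]; linarith
  · rw [xc_eq (by omega)]; linarith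
  · rw [yc_eq]; linarith
  · rw [yc_eq]; push_cast; linarith

lemma resc_eq_of_eq_affine {f : ℝ → ℝ → ℝ} {k : ℕ} {x y s t : ℝ}
    (h : f (2 ^ k * x) (2 ^ k * y) = 1 + s * (2 ^ k * x) + t * (2 ^ k * y)) :
    resc f k x y = 2 ^ (-(k : ℤ)) + s * x + t * y := by
  rw [resc, h]
  linear_combination (s * x + t * y) * two_zpow_neg_mul_two_pow k

lemma pyramid_eq_affine_on_subcell {p : E2 → E2} (hp : PyramidSpec p) {k i : ℕ} (hk : 2 ≤ k)
    (hi : i + 3 ≤ 2 ^ k) {g : ℝ → ℝ → ℝ} (hg : secondFun k i = resc g k)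
    {A : Matrix (Fin 2) (Fin 2) ℝ} {P U : ℝ} (hP : -1 ≤ P) (hP' : P + 1 / 4 ≤ 1) (hU : -1 ≤ U)
    (hU' : U + 1 / 4 ≤ 1)
    (haff : ∀ X ∈ Ioo P (P + 1 / 4), ∀ Y ∈ Ioo U (U + 1 / 4),
      aFun X Y = 1 + A 0 0 * X + A 0 1 * Y ∧ g X Y = 1 + A 1 0 * X + A 1 1 * Y) :
    ∃ v : E2, ∀ w ∈ subcell k i P U, p w = matCLM A w + v := by
  refine ⟨pt (2 ^ (-(k : ℤ)) - A 0 0 * ctrX k - A 0 1 * ctrY k i)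
    (2 ^ (-(k : ℤ)) - A 1 0 * ctrX k - A 1 1 * ctrY k i), fun w hw => ?_⟩
  have hcell := subcell_subset_cell hk hP hP' hU hU' hw
  obtain ⟨hp0, hp1⟩ := hp.1 k (by omega) i (by omega) w
    ⟨hcell, (cell_subset_Tset_inter_Qsq hk hi hcell).1⟩
  obtain ⟨hx, hy⟩ := hw
  have hX := two_pow_mul_mem_Ioo (k := k) (a := P) (b := P + 1 / 4) (u := w 0 - ctrX k)
    ⟨by linarith [hx.1], by linarith [hx.2]⟩
  have hY := two_pow_mul_mem_Ioo (k := k) (a := U) (b := U + 1 / 4) (u := w 1 - ctrY k i)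
    ⟨by linarith [hy.1], by linarith [hy.2]⟩
  obtain ⟨ha, hg'⟩ := haff _ hX _ hY
  rw [hg, resc_eq_of_eq_affine hg'] at hp1
  rw [resc_eq_of_eq_affine ha] at hp0
  rw [← pt_eta (p w), hp0, hp1, matCLM_apply]
  ext j
  fin_cases j <;> simp <;> ring

lemma exists_row_near {k : ℕ} (hk : 2 ≤ k) {t : ℝ} (ht0 : 0 ≤ t) (ht2 : t ≤ 2)
    {g : ℝ → ℝ → ℝ} (hg : g ∈ ({dFun, cFun} : Set (ℝ → ℝ → ℝ))) :
    ∃ i, i + 3 ≤ 2 ^ k ∧ secondFun k i = resc g k ∧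
      ∀ u ∈ Icc (yc k i) (yc k (i + 1)), |u - t| ≤ 8 * 2 ^ (-(k : ℤ)) := by
  have h2k : 2 ^ k = 2 * 2 ^ (k - 1) := by rw [← pow_succ']; congr; omega
  have hN : 2 ≤ 2 ^ (k - 1) :=
    calc 2 = 2 ^ 1 := rfl
      _ ≤ 2 ^ (k - 1) := Nat.pow_le_pow_right two_pos (by omega)
  have hNσ : ((2 ^ (k - 1) : ℕ) : ℝ) * (4 * 2 ^ (-(k : ℤ))) = 2 := by
    have h := two_zpow_neg_mul_two_pow k
    rw [show (2 : ℝ) ^ k = 2 * 2 ^ (k - 1) by exact_mod_cast h2k] at h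
    push_cast
    linear_combination 2 * h
  -- `m + 2 ≤ 2^(k-1)` keeps the rows `2m, 2m + 1` below the diagonal of `T` and away from the
  -- top row `2^k - 2`, where the second component is built from `b`.
  obtain ⟨m, hm, hnear⟩ := exists_nat_mul_near (by positivity) hN hNσ ht0 ht2
  obtain ⟨i, hi, hsec, hi1, hi2⟩ :
      ∃ i, i + 3 ≤ 2 ^ k ∧ secondFun k i = resc g k ∧ 2 * m ≤ i ∧ i ≤ 2 * m + 1 := by
    simp only [mem_insert_iff, mem_singleton_iff] at hg
    rcases hg with rfl | rfl
    · exact ⟨2 * m, by omega, secondFun_even (by omega), le_rfl, by omega⟩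
    · exact ⟨2 * m + 1, by omega, secondFun_odd (by omega), by omega, le_rfl⟩
  refine ⟨i, hi, hsec, fun u ⟨hu1, hu2⟩ => ?_⟩
  rw [yc_eq] at hu1 hu2
  push_cast at hu2
  have hσ : (0 : ℝ) < 2 ^ (-(k : ℤ)) := by positivity
  have hi1' : (2 * m : ℝ) ≤ i := by exact_mod_cast hi1
  have hi2' : (i : ℝ) ≤ 2 * m + 1 := by exact_mod_cast hi2
  have := hnear u ⟨by nlinarith, by nlinarith⟩
  linarith

lemma denseGradientsNear_right_edge_of_nonneg {p : E2 → E2} (hp : PyramidSpec p) {t r : ℝ}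
    (ht0 : 0 ≤ t) (ht2 : t ≤ 2) (hr : 0 < r) (hr4 : r < 1 / 4) :
    DenseGradientsNear p (pt 2 t) r := by
  intro A hA
  obtain ⟨k, hk, hσr, hσr'⟩ := exists_two_zpow_neg_near hr hr4
  obtain ⟨g, hg, P, U, hP, hP', hU, hU', haff⟩ := exists_affine_subsquare hA
  obtain ⟨i, hi, hsec, hrow⟩ := exists_row_near hk ht0 ht2 hg
  obtain ⟨v, hv⟩ := pyramid_eq_affine_on_subcell hp hk hi hsec hP hP' hU hU' haff
  have hcell : subcell k i P U ⊆ Qki k i := subcell_subset_cell hk hP hP' hU hU'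
  have hsub : subcell k i P U ⊆ Metric.ball (pt 2 t) r ∩ OmegaSet p A :=
    subset_inter (hcell.trans (cell_subset_ball hk (by linarith) hrow))
      (subset_omegaSet_of_eqOn (isOpen_rect _ _ _ _)
        (fun _ hw => (cell_subset_Tset_inter_Qsq hk hi (hcell hw)).2) hv)
  calc ENNReal.ofReal ((r / 128) ^ 2) ≤ volume (subcell k i P U) := by
        rw [volume_subcell]
        exact ENNReal.ofReal_le_ofReal (pow_le_pow_left₀ (by positivity) (by linarith) 2)
    _ ≤ _ := measure_mono hsub

lemma DenseGradientsNear.of_pyramid_symmetry {p : E2 → E2} (hp : PyramidSpec p)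
    {M : Matrix (Fin 2) (Fin 2) ℝ} (hM : M ∈ ({A2, A3, -A3} : Set (Matrix (Fin 2) (Fin 2) ℝ)))
    {z : E2} {r : ℝ} (h : DenseGradientsNear p z r) : DenseGradientsNear p (matCLM M z) r := by
  simp only [mem_insert_iff, mem_singleton_iff] at hM
  refine h.of_invariant ?_ ?_ ?_ ?_
  · rcases hM with rfl | rfl | rfl <;> simp [Eset]
  · rcases hM with rfl | rfl | rfl <;> ext i j <;> fin_cases i <;> fin_cases j <;> simp [A2, A3]
  · intro w ⟨⟨_, _⟩, _, _⟩
    rcases hM with rfl | rfl | rfl <;> simp only [matCLM_apply, A2, A3] at * <;>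
      refine ⟨⟨?_, ?_⟩, ?_, ?_⟩ <;> simp at * <;> linarith
  · intro w
    obtain ⟨hswap, hx, hy⟩ := hp.2.1 (w 0) (w 1)
    conv_rhs => rw [← pt_eta w]
    rcases hM with rfl | rfl | rfl <;> simp [matCLM_apply, A2, A3, hswap, hx, hy]

lemma denseGradientsNear_right_edge {p : E2 → E2} (hp : PyramidSpec p) {t r : ℝ} (ht : |t| ≤ 2)
    (hr : 0 < r) (hr4 : r < 1 / 4) : DenseGradientsNear p (pt 2 t) r := by
  obtain ⟨ht1, ht2⟩ := abs_le.1 ht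
  rcases le_total 0 t with ht0 | ht0
  · exact denseGradientsNear_right_edge_of_nonneg hp ht0 ht2 hr hr4
  · have h := (denseGradientsNear_right_edge_of_nonneg hp (neg_nonneg.2 ht0) (by linarith) hr
      hr4).of_pyramid_symmetry hp (M := -A3) (by simp)
    simpa [matCLM_apply, A3] using h

lemma denseGradientsNear_vertical_edge {p : E2 → E2} (hp : PyramidSpec p) {x t r : ℝ}
    (hx : |x| = 2) (ht : |t| ≤ 2) (hr : 0 < r) (hr4 : r < 1 / 4) :
    DenseGradientsNear p (pt x t) r := by
  rcases (abs_eq zero_le_two).1 hx with rfl | rfl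
  · exact denseGradientsNear_right_edge hp ht hr hr4
  · simpa [matCLM_apply, A3] using
      (denseGradientsNear_right_edge hp ht hr hr4).of_pyramid_symmetry hp (M := A3) (by simp)

lemma denseGradientsNear_of_mem_frontier {p : E2 → E2} (hp : PyramidSpec p) {z : E2}
    (hz : z ∈ frontier Qsq) {r : ℝ} (hr : 0 < r) (hr4 : r < 1 / 4) :
    DenseGradientsNear p z r := by
  obtain ⟨h0, h1, h | h⟩ := abs_le_two_and_of_mem_frontier_Qsq hz <;> rw [← pt_eta z]
  · exact denseGradientsNear_vertical_edge hp h h1 hr hr4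
  · simpa [matCLM_apply, A2] using
      (denseGradientsNear_vertical_edge hp h h0 hr hr4).of_pyramid_symmetry hp (M := A2) (by simp)

/-- there is a constant `c > 0` (one may take `c = 1/128`) such that for every
`z ∈ ∂Q`, every radius `0 < r < 1/4` and every matrix `±A_i ∈ E`, the Lebesgue measure of
`B(z,r) ∩ Ω^{p_v}_{±i}` is at least `c·r²`. -/
theorem stmt3 (p : E2 → E2) (hp : PyramidSpec p) :
    ∃ c : ℝ, 0 < c ∧
      ∀ z ∈ frontier Qsq, ∀ r : ℝ, 0 < r → r < 1 / 4 →
        ∀ A ∈ Eset, ENNReal.ofReal (c * r ^ 2) ≤ volume (Metric.ball z r ∩ OmegaSet p A) := by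
  refine ⟨1 / 16384, by norm_num, fun z hz r hr hr4 A hA => ?_⟩
  rw [show 1 / 16384 * r ^ 2 = (r / 128) ^ 2 by ring]
  exact denseGradientsNear_of_mem_frontier hp hz hr hr4 A hA

end
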